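/- Let W > 0, λ > 0, r > 2 and Z ∈ ℝ with λ(1 + W) < |Z| < rλW and W > 1/(r−1). Then β* = Soft(Z, rλ/(r−1))/(W − 1/(r−1)) satisfies λ < |β*| ≤ rλ and is a stationary point of f(β) = (W/2)β² − Zβ + p_SCAD(β; λ, r), where on (λ, rλ] the SCAD penalty has derivative p'_SCAD(θ) = (rλ − θ)/(r − 1). -/

import Mathlib

/-- Soft-thresholding operator. -/
noncomputable def soft (z γ : ℝ) : ℝ := Real.sign z * max (|z| - γ) 0

/-- SCAD penalty: λθ on [0, λ]; −(θ² − 2rλθ + λ²)/(2(r−1)) on (λ, rλ]; λ²(r+1)/2 beyond,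
so that p'(θ) = (rλ − θ)/(r − 1) on (λ, rλ]. -/
noncomputable def pSCAD (lam r θ : ℝ) : ℝ :=
  if θ ≤ lam then lam * θ
  else if θ ≤ r * lam then -(θ ^ 2 - 2 * r * lam * θ + lam ^ 2) / (2 * (r - 1))
  else lam ^ 2 * (r + 1) / 2

/-! On the open middle piece λ < |β| < rλ the SCAD penalty is a concave quadratic in |β|, so the
stationarity equation of the objective there is linear in β: `(W - 1/(r-1)) β = Z - sign β · rλ/(r-1)`.
Its solution has the sign of `Z` and is exactly `β*`, and the two bounds on `|Z|` translate into
`λ < |β*| < rλ`, which is what licenses using the middle piece. -/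

open Set

lemma soft_of_lt_abs {z γ : ℝ} (h : γ < |z|) :
    soft z γ = SignType.sign z * (|z| - γ) := by
  rw [soft, max_eq_left (sub_nonneg.2 h.le)]
  rcases lt_trichotomy z 0 with hz | rfl | hz
  · simp [Real.sign_of_neg hz, hz]
  · simp
  · simp [Real.sign_of_pos hz, hz]

lemma hasDerivAt_pSCAD_of_mem_Ioo {lam r θ : ℝ} (hr : r ≠ 1) (hθ : θ ∈ Ioo lam (r * lam)) :
    HasDerivAt (pSCAD lam r) ((r * lam - θ) / (r - 1)) θ := by
  have hquad : HasDerivAt (fun x => -(x ^ 2 - 2 * r * lam * x + lam ^ 2) / (2 * (r - 1)))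
      ((r * lam - θ) / (r - 1)) θ := by
    refine ((((hasDerivAt_pow 2 θ).fun_sub ((hasDerivAt_id' θ).const_mul (2 * r * lam))).add_const
      (lam ^ 2)).fun_neg.div_const (2 * (r - 1))).congr_deriv ?_
    field_simp [sub_ne_zero.2 hr]
    ring
  refine hquad.congr_of_eventuallyEq ?_
  filter_upwards [Ioo_mem_nhds hθ.1 hθ.2] with x hx
  rw [pSCAD, if_neg hx.1.not_ge, if_pos hx.2.le]

lemma hasDerivAt_pSCAD_abs {lam r b : ℝ} (hlam : 0 ≤ lam) (hr : r ≠ 1)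
    (hb : |b| ∈ Ioo lam (r * lam)) :
    HasDerivAt (fun β => pSCAD lam r |β|) ((r * lam - |b|) / (r - 1) * SignType.sign b) b :=
  (hasDerivAt_pSCAD_of_mem_Ioo hr hb).comp b
    (hasDerivAt_abs (abs_pos.1 (hlam.trans_lt hb.1)))

lemma hasDerivAt_scad_objective {W Z lam r b : ℝ} (hlam : 0 ≤ lam) (hr : r ≠ 1)
    (hb : |b| ∈ Ioo lam (r * lam)) :
    HasDerivAt (fun β => W / 2 * β ^ 2 - Z * β + pSCAD lam r |β|)
      (W * b - Z + (r * lam - |b|) / (r - 1) * SignType.sign b) b := by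
  have hquad : HasDerivAt (fun β => W / 2 * β ^ 2 - Z * β) (W * b - Z) b := by
    refine (((hasDerivAt_pow 2 b).const_mul (W / 2)).fun_sub
      ((hasDerivAt_id' b).const_mul Z)).congr_deriv ?_
    ring
  exact hquad.fun_add (hasDerivAt_pSCAD_abs hlam hr hb)

lemma abs_sign_mul_of_pos {z t : ℝ} (hz : z ≠ 0) (ht : 0 < t) :
    |(SignType.sign z : ℝ) * t| = t := by
  rw [abs_mul, abs_of_pos ht]
  rcases hz.lt_or_gt with hz | hz <;> simp [hz]

lemma sign_sign_mul_of_pos {z t : ℝ} (ht : 0 < t) :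
    SignType.sign ((SignType.sign z : ℝ) * t) = SignType.sign z := by
  rw [sign_mul, sign_pos ht, mul_one]
  rcases lt_trichotomy z 0 with hz | rfl | hz <;> simp [*]

theorem scad_stationary_middle_general (W lam r Z : ℝ) (hlam : 0 < lam)
    (hr : 2 < r) (hWr : 1 / (r - 1) < W)
    (hZlo : lam * (1 + W) < |Z|) (hZhi : |Z| < r * lam * W) :
    lam < |soft Z (r * lam / (r - 1)) / (W - 1 / (r - 1))| ∧
      |soft Z (r * lam / (r - 1)) / (W - 1 / (r - 1))| ≤ r * lam ∧
      HasDerivAt (fun β => W / 2 * β ^ 2 - Z * β + pSCAD lam r |β|) 0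
        (soft Z (r * lam / (r - 1)) / (W - 1 / (r - 1))) := by
  have hr1 : 0 < r - 1 := by linarith
  set γ := r * lam / (r - 1) with hγ
  set D := W - 1 / (r - 1) with hD_def
  have hD : 0 < D := sub_pos.2 hWr
  -- the ends of the range of |Z| are exactly where (|Z| - γ) / D equals λ and rλ
  have hγ_lo : γ + lam * D = lam * (1 + W) := by rw [hγ, hD_def]; field_simp; ring
  have hγ_hi : γ + r * lam * D = r * lam * W := by rw [hγ, hD_def]; field_simp; ring
  have hZγ : γ < |Z| := by nlinarith
  have hZ : Z ≠ 0 := abs_pos.1 ((by positivity : 0 < γ).trans hZγ)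
  obtain ⟨t, ht⟩ : ∃ t, t = (|Z| - γ) / D := ⟨_, rfl⟩
  have ht_lo : lam < t := by rw [ht, lt_div_iff₀ hD]; linarith
  have ht_hi : t < r * lam := by rw [ht, div_lt_iff₀ hD]; linarith
  have hβ : soft Z γ / D = SignType.sign Z * t := by rw [soft_of_lt_abs hZγ, ht]; ring
  have habs : |soft Z γ / D| = t := by rw [hβ, abs_sign_mul_of_pos hZ (hlam.trans ht_lo)]
  refine ⟨habs ▸ ht_lo, habs ▸ ht_hi.le, ?_⟩
  refine (hasDerivAt_scad_objective hlam.le (by linarith) (habs ▸ ⟨ht_lo, ht_hi⟩)).congr_deriv ?_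
  rw [habs, hβ, sign_sign_mul_of_pos (hlam.trans ht_lo)]
  have hDt : (W - 1 / (r - 1)) * t = |Z| - r * lam / (r - 1) := by
    rw [← hD_def, ← hγ, ht]; field_simp
  linear_combination (SignType.sign Z : ℝ) * hDt + sign_mul_abs Z

/-- SCAD coordinate update, middle regime: for λ(1+W) < |Z| < rλW and W > 1/(r−1),
β* = Soft(Z, rλ/(r−1))/(W − 1/(r−1)) satisfies λ < |β*| ≤ rλ and is a stationary point
of the SCAD-penalized coordinate objective. -/
theorem scad_stationary_middle (W lam r Z : ℝ) (hW : 0 < W) (hlam : 0 < lam)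
    (hr : 2 < r) (hWr : 1 / (r - 1) < W)
    (hZlo : lam * (1 + W) < |Z|) (hZhi : |Z| < r * lam * W) :
    lam < |soft Z (r * lam / (r - 1)) / (W - 1 / (r - 1))| ∧
      |soft Z (r * lam / (r - 1)) / (W - 1 / (r - 1))| ≤ r * lam ∧
      HasDerivAt (fun β => W / 2 * β ^ 2 - Z * β + pSCAD lam r |β|) 0
        (soft Z (r * lam / (r - 1)) / (W - 1 / (r - 1))) :=
  scad_stationary_middle_general W lam r Z hlam hr hWr hZlo hZhi
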